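/- arXiv:1004.0025 — 2 statements merged into one kernel-verified Lean document; each statement's English description precedes it below -/
import Mathlib

section
/- The set of rational numbers r such that there exist regular integers p, q with 1 < p ≤ 125, 1 < q ≤ 125, r = p/q, 1 < r < 1 + √2, and additionally r ≥ 9/5, is exactly the sixteen-element set consisting of {12/5, 64/27, 75/32, 125/54, 9/4, 20/9, 54/25, 32/15, 25/12, 81/40, 2, 48/25, 15/8, 50/27, 9/5} together with the single extra ratio 125/64. -/
/-! A regular number `2^a 3^b 5^c ≤ N` has `a ≤ log₂ N`, `b ≤ log₃ N`, `c ≤ log₅ N`, so the regular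
numbers up to `N` form an explicit finite set. For `r = p/q` the condition `r < 1 + √2` is the
polynomial inequality `p² < 2pq + q²`, so the admissible ratios with `p, q ≤ 125` are the image of a
finite, decidable set of pairs, which the kernel evaluates. -/

/-- A positive integer is regular if it is of the form `2^a · 3^b · 5^c`. -/
def Regular (n : ℕ) : Prop := ∃ a b c : ℕ, n = 2 ^ a * 3 ^ b * 5 ^ c

open Finset

def regularsUpTo (N : ℕ) : Finset ℕ :=
  ((range (Nat.log 2 N + 1) ×ˢ range (Nat.log 3 N + 1) ×ˢ range (Nat.log 5 N + 1)).image
    fun e => 2 ^ e.1 * 3 ^ e.2.1 * 5 ^ e.2.2).filter (· ≤ N)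

theorem mem_regularsUpTo {n N : ℕ} : n ∈ regularsUpTo N ↔ Regular n ∧ n ≤ N := by
  simp only [regularsUpTo, mem_filter, mem_image, mem_product, mem_range, Prod.exists]
  constructor
  · rintro ⟨⟨a, b, c, -, rfl⟩, hN⟩
    exact ⟨⟨a, b, c, rfl⟩, hN⟩
  · rintro ⟨⟨a, b, c, rfl⟩, hN⟩
    have hpos : 0 < 2 ^ a * 3 ^ b * 5 ^ c := by positivity
    have log_bound (p e : ℕ) (hp : 1 < p) (hdvd : p ^ e ∣ 2 ^ a * 3 ^ b * 5 ^ c) :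
        e < Nat.log p N + 1 :=
      Nat.lt_succ_of_le <| Nat.le_log_of_pow_le hp <| (Nat.le_of_dvd hpos hdvd).trans hN
    refine ⟨⟨a, b, c, ⟨log_bound 2 a one_lt_two ?_, log_bound 3 b (by norm_num) ?_,
      log_bound 5 c (by norm_num) ?_⟩, rfl⟩, hN⟩
    · exact Dvd.intro (3 ^ b * 5 ^ c) (by ring)
    · exact Dvd.intro (2 ^ a * 5 ^ c) (by ring)
    · exact Dvd.intro_left _ rfl

theorem lt_one_add_sqrt_two_mul_iff {x y : ℝ} (hx : 0 ≤ x) (hy : 0 < y) :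
    x < (1 + √2) * y ↔ x ^ 2 < 2 * x * y + y ^ 2 := by
  have hs : √2 ^ 2 = 2 := Real.sq_sqrt zero_le_two
  have hs1 : 1 < √2 := by rw [Real.lt_sqrt zero_le_one]; norm_num
  have factor : x ^ 2 - (2 * x * y + y ^ 2) = (x - (1 + √2) * y) * (x + (√2 - 1) * y) := by
    linear_combination y ^ 2 * hs
  have hpos : 0 < x + (√2 - 1) * y := by nlinarith
  constructor
  · intro h
    linarith [mul_neg_of_neg_of_pos (sub_neg.2 h) hpos]
  · intro h
    by_contra! h'
    linarith [mul_nonneg (sub_nonneg.2 h') hpos.le]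

theorem one_lt_ratio_lt_one_add_sqrt_two_iff {p q : ℕ} (hq : 0 < q) :
    (1 < (((p : ℚ) / q : ℚ) : ℝ) ∧ (((p : ℚ) / q : ℚ) : ℝ) < 1 + √2) ↔
      q < p ∧ p ^ 2 < 2 * p * q + q ^ 2 := by
  have hq' : (0 : ℝ) < q := Nat.cast_pos.2 hq
  push_cast
  rw [one_lt_div hq', div_lt_iff₀ hq', lt_one_add_sqrt_two_mul_iff (Nat.cast_nonneg p) hq']
  exact_mod_cast Iff.rfl

def admissiblePairs (N : ℕ) : Finset (ℕ × ℕ) :=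
  (regularsUpTo N ×ˢ regularsUpTo N).filter fun (p, q) =>
    1 < q ∧ q < p ∧ p ^ 2 < 2 * p * q + q ^ 2

theorem mem_admissiblePairs {p q N : ℕ} :
    (p, q) ∈ admissiblePairs N ↔ (Regular p ∧ p ≤ N) ∧ (Regular q ∧ q ≤ N) ∧
      1 < q ∧ q < p ∧ p ^ 2 < 2 * p * q + q ^ 2 := by
  simp only [admissiblePairs, mem_filter, mem_product, mem_regularsUpTo, and_assoc]

theorem image_div_admissiblePairs_125 :
    (((admissiblePairs 125).filter fun (p, q) => 9 * q ≤ 5 * p).image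
      fun (p, q) => (p : ℚ) / q) =
    ({12/5, 64/27, 75/32, 125/54, 9/4, 20/9, 54/25, 32/15, 25/12, 81/40, 2,
      48/25, 15/8, 50/27, 9/5} : Finset ℚ) ∪ {125/64} := by
  decide +kernel

/-- The admissible ratios `r = p/q` with regular `1 < p ≤ 125`, `1 < q ≤ 125`,
`1 < r < 1 + √2` and `r ≥ 9/5` are exactly the fifteen Plimpton 322 ratios
together with the single extra ratio `125/64`. -/
theorem plimpton_ratios_bound_125 :
    {r : ℚ | ∃ p q : ℕ, Regular p ∧ Regular q ∧ 1 < p ∧ p ≤ 125 ∧ 1 < q ∧ q ≤ 125 ∧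
        r = (p : ℚ) / q ∧ 1 < (r : ℝ) ∧ (r : ℝ) < 1 + Real.sqrt 2 ∧ 9 / 5 ≤ r} =
    ({12/5, 64/27, 75/32, 125/54, 9/4, 20/9, 54/25, 32/15, 25/12, 81/40, 2,
      48/25, 15/8, 50/27, 9/5} : Set ℚ) ∪ {125/64} := by
  have nine_fifths_le_iff {p q : ℕ} (hq : 1 < q) : (9 / 5 : ℚ) ≤ p / q ↔ 9 * q ≤ 5 * p := by
    rw [div_le_div_iff₀ (by norm_num) (by positivity)]
    norm_cast
    omega
  have image_eq := congrArg ((↑) : Finset ℚ → Set ℚ) image_div_admissiblePairs_125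
  push_cast at image_eq
  rw [← image_eq]
  ext r
  simp only [Set.mem_ofPred_eq, Set.mem_image, mem_admissiblePairs, Prod.exists]
  refine exists₂_congr fun p q => ?_
  constructor
  · rintro ⟨hp, hq, -, hp125, hq1, hq125, rfl, hr⟩
    obtain ⟨hqp, hpq⟩ := (one_lt_ratio_lt_one_add_sqrt_two_iff (by omega)).1 ⟨hr.1, hr.2.1⟩
    exact ⟨⟨⟨⟨hp, hp125⟩, ⟨hq, hq125⟩, hq1, hqp, hpq⟩, (nine_fifths_le_iff hq1).1 hr.2.2⟩, rfl⟩
  · rintro ⟨⟨⟨⟨hp, hp125⟩, ⟨hq, hq125⟩, hq1, hqp, hpq⟩, h95⟩, rfl⟩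
    obtain ⟨hr1, hr2⟩ := (one_lt_ratio_lt_one_add_sqrt_two_iff (by omega)).2 ⟨hqp, hpq⟩
    exact ⟨hp, hq, by omega, hp125, hq1, hq125, rfl, hr1, hr2, (nine_fifths_le_iff hq1).2 h95⟩
end

section
/- The only rational number r such that there exist regular integers p, q with 1 ≤ p ≤ 3600, 1 ≤ q ≤ 3600, r = p/q and 12/5 < r < 1 + √2, is r = 3125/1296 (the sexagesimal number 2;24 40 33 20). -/
open Finset

def regularUpTo (N : ℕ) : Finset ℕ :=
  ((range (Nat.log 2 N + 1) ×ˢ range (Nat.log 3 N + 1) ×ˢ range (Nat.log 5 N + 1)).filter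
    fun e => 2 ^ e.1 * 3 ^ e.2.1 * 5 ^ e.2.2 ≤ N).image fun e => 2 ^ e.1 * 3 ^ e.2.1 * 5 ^ e.2.2

theorem Regular.mem_regularUpTo {n N : ℕ} (hn : Regular n) (hN : n ≤ N) :
    n ∈ regularUpTo N := by
  obtain ⟨a, b, c, rfl⟩ := hn
  have le_log {p k : ℕ} (hp : 1 < p) (hdvd : p ^ k ∣ 2 ^ a * 3 ^ b * 5 ^ c) : k ≤ Nat.log p N :=
    Nat.le_log_of_pow_le hp ((Nat.le_of_dvd (by positivity) hdvd).trans hN)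
  simp only [regularUpTo, mem_image, mem_filter, mem_product, mem_range, Nat.lt_succ_iff]
  refine ⟨(a, b, c), ⟨⟨le_log one_lt_two ?_, le_log (by norm_num) ?_, le_log (by norm_num) ?_⟩,
    hN⟩, rfl⟩
  · exact dvd_mul_of_dvd_left (dvd_mul_right _ _) _
  · exact dvd_mul_of_dvd_left (dvd_mul_left _ _) _
  · exact dvd_mul_left _ _

theorem lt_one_add_sqrt_two_iff {x : ℝ} (hx : 0 ≤ x) : x < 1 + √2 ↔ x ^ 2 < 2 * x + 1 := by
  have hsq : √2 ^ 2 = 2 := Real.sq_sqrt zero_le_two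
  have hgt : 1 < √2 := by rw [Real.lt_sqrt zero_le_one]; norm_num
  constructor <;> intro h <;> nlinarith

theorem twelve_fifths_lt_div_lt_one_add_sqrt_two_iff {p q : ℕ} (hq : 0 < q) :
    (12 / 5 < (p / q : ℝ) ∧ (p / q : ℝ) < 1 + √2) ↔ 12 * q < 5 * p ∧ p ^ 2 < 2 * p * q + q ^ 2 := by
  have hq' : (0 : ℝ) < q := by exact_mod_cast hq
  rw [lt_one_add_sqrt_two_iff (by positivity), div_lt_div_iff₀ (by norm_num) hq', div_pow,
    div_lt_iff₀ (by positivity), show (2 * (p / q : ℝ) + 1) * q ^ 2 = 2 * p * q + q ^ 2 by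
      field_simp]
  norm_cast
  rw [mul_comm (p : ℕ) 5]

theorem eq_of_mem_regularUpTo_3600 : ∀ p ∈ regularUpTo 3600, ∀ q ∈ regularUpTo 3600,
    12 * q < 5 * p → p ^ 2 < 2 * p * q + q ^ 2 → 1296 * p = 3125 * q := by
  decide +kernel

/-- The only ratio `r = p/q` of regular integers `1 ≤ p, q ≤ 3600` lying
strictly between `12/5` and `1 + √2` is `3125/1296` (sexagesimal 2;24 40 33 20). -/
theorem unique_ratio_between :
    {r : ℚ | ∃ p q : ℕ, Regular p ∧ Regular q ∧ 1 ≤ p ∧ p ≤ 3600 ∧ 1 ≤ q ∧ q ≤ 3600 ∧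
        r = (p : ℚ) / q ∧ 12 / 5 < (r : ℝ) ∧ (r : ℝ) < 1 + Real.sqrt 2} =
    {3125 / 1296} := by
  ext r
  simp only [Set.mem_ofPred_eq, Set.mem_singleton_iff]
  constructor
  · rintro ⟨p, q, hp, hq, -, hpN, hq1, hqN, rfl, hwindow⟩
    push_cast at hwindow
    obtain ⟨hlo, hhi⟩ := (twelve_fifths_lt_div_lt_one_add_sqrt_two_iff hq1).1 hwindow
    have hpq := eq_of_mem_regularUpTo_3600 p (hp.mem_regularUpTo hpN) q (hq.mem_regularUpTo hqN)
      hlo hhi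
    rw [div_eq_div_iff (by positivity) (by norm_num), mul_comm]
    exact_mod_cast hpq
  · rintro rfl
    refine ⟨3125, 1296, ⟨0, 0, 5, rfl⟩, ⟨4, 4, 0, rfl⟩, by norm_num, by norm_num, by norm_num,
      by norm_num, by norm_num, ?_⟩
    push_cast
    exact_mod_cast
      (twelve_fifths_lt_div_lt_one_add_sqrt_two_iff (p := 3125) (q := 1296) (by norm_num)).2
        (by norm_num)
end
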